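/- Let A be a G-graded ring, M a G-graded left A-module, and B = END_A(M) the G-graded ring of graded endomorphisms of M. Then B is strongly graded (i.e., B_l B_k = B_{lk} for all l, k ∈ G) if and only if M ∼ M(l) for all l ∈ G. -/

import Mathlib

/-- A `G`-grading on a unital ring `A`: a family of additive subgroups with
`A_g A_h ⊆ A_{gh}`, `1 ∈ A₁`, whose internal direct sum is `A`. -/
structure RingGrading (G : Type*) [Group G] [DecidableEq G]
    (A : Type*) [Ring A] where
  comp : G → AddSubgroup A
  one_mem : (1 : A) ∈ comp 1
  mul_mem : ∀ ⦃g h : G⦄ ⦃a b : A⦄, a ∈ comp g → b ∈ comp h → a * b ∈ comp (g * h)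
  isInternal : DirectSum.IsInternal comp

variable {G : Type*} [Group G] [DecidableEq G] {A : Type*} [Ring A]

/-- A `G`-grading on a left `A`-module `M`, compatible with the ring grading `𝒜`. -/
structure ModGrading (𝒜 : RingGrading G A) (M : Type*)
    [AddCommGroup M] [Module A M] where
  comp : G → AddSubgroup M
  smul_mem : ∀ ⦃g h : G⦄ ⦃a : A⦄ ⦃m : M⦄,
    a ∈ 𝒜.comp g → m ∈ comp h → a • m ∈ comp (g * h)
  isInternal : DirectSum.IsInternal comp

section GradedModules

variable {M N : Type*} [AddCommGroup M] [Module A M] [AddCommGroup N] [Module A N]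

/-- An `A`-linear map `f : M → N` has degree `l` (with respect to given families of
homogeneous components) if `f(M_g) ⊆ N_{gl}` for all `g`.  Taking the family
`g ↦ N_{gl}` as codomain grading realizes graded morphisms `M → N(l)`. -/
def IsDegree (ℳ : G → AddSubgroup M) (𝒩 : G → AddSubgroup N)
    (f : M →ₗ[A] N) (l : G) : Prop :=
  ∀ g : G, ∀ m ∈ ℳ g, f m ∈ 𝒩 (g * l)

/-- A graded morphism `f : M → N` -- i.e. a degree-one `A`-linear map. -/
def IsGradedHom (ℳ : G → AddSubgroup M) (𝒩 : G → AddSubgroup N)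
    (f : M →ₗ[A] N) : Prop :=
  ∀ g : G, ∀ m ∈ ℳ g, f m ∈ 𝒩 g

/-- A submodule `N'` is graded if `N' = ⊕_g (N' ∩ M_g)`. -/
def IsGradedSubmodule (ℳ : G → AddSubgroup M) (N' : Submodule A M) : Prop :=
  N'.toAddSubgroup = ⨆ g : G, N'.toAddSubgroup ⊓ ℳ g

/-- The grading induced on (the subtype of) a submodule. -/
def subFam (ℳ : G → AddSubgroup M) (N' : Submodule A M) : G → AddSubgroup ↥N' :=
  fun g => (ℳ g).comap N'.subtype.toAddMonoidHom

/-- The componentwise grading on `M⁽ⁿ⁾ = Fin n → M`. -/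
def piFam (ℳ : G → AddSubgroup M) (n : ℕ) : G → AddSubgroup (Fin n → M) :=
  fun g => AddSubgroup.pi Set.univ fun _ => ℳ g

/-- The idempotent endomorphism `ε_{N'} = ι_{N'} ∘ π_{N'}` associated to a direct
sum decomposition `N = N' ⊕ N''`. -/
noncomputable def epsIdem (N' N'' : Submodule A N) (h : IsCompl N' N'') :
    N →ₗ[A] N :=
  N'.subtype ∘ₗ (Submodule.linearProjOfIsCompl (R := A) N' N'' h)

/-- `N` divides `M` (relative to the given gradings): `N` is isomorphic, as a graded
module, to a graded direct summand of `M⁽ⁿ⁾` for some `n`. -/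
def Divides (𝒩 : G → AddSubgroup N) (ℳ : G → AddSubgroup M) : Prop :=
  ∃ (n : ℕ) (V V' : Submodule A (Fin n → M)),
    IsGradedSubmodule (piFam ℳ n) V ∧ IsGradedSubmodule (piFam ℳ n) V' ∧
    IsCompl V V' ∧
    ∃ e : N ≃ₗ[A] ↥V, ∀ (g : G) (x : N),
      x ∈ 𝒩 g ↔ (e x : Fin n → M) ∈ piFam ℳ n g

/-- `N` semi-divides `M` (relative to the given gradings): there is a nonzero graded
direct summand `N'` of `N` with `N' | M`, `ε_{N'} ∘ f = f` for every graded
`f : M → N` and `g ∘ ε_{N'} = g` for every graded `g : N → M`. -/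
def SemiDivides (𝒩 : G → AddSubgroup N) (ℳ : G → AddSubgroup M) : Prop :=
  ∃ (N' N'' : Submodule A N), N' ≠ ⊥ ∧
    IsGradedSubmodule 𝒩 N' ∧ IsGradedSubmodule 𝒩 N'' ∧
    ∃ h : IsCompl N' N'',
      Divides (A := A) (subFam 𝒩 N') ℳ ∧
      (∀ f : M →ₗ[A] N, IsGradedHom ℳ 𝒩 f → epsIdem N' N'' h ∘ₗ f = f) ∧
      (∀ f : N →ₗ[A] M, IsGradedHom 𝒩 ℳ f → f ∘ₗ epsIdem N' N'' h = f)

/-- `M` and `N` are epsilon-similar. -/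
def EpsSimilar (ℳ : G → AddSubgroup M) (𝒩 : G → AddSubgroup N) : Prop :=
  ∃ (M' M'' : Submodule A M) (N' N'' : Submodule A N),
    M' ≠ ⊥ ∧ N' ≠ ⊥ ∧
    IsGradedSubmodule ℳ M' ∧ IsGradedSubmodule ℳ M'' ∧
    IsGradedSubmodule 𝒩 N' ∧ IsGradedSubmodule 𝒩 N'' ∧
    ∃ (hM : IsCompl M' M'') (hN : IsCompl N' N''),
    ∃ (f : M →ₗ[A] N) (g : N →ₗ[A] M),
      IsGradedHom ℳ 𝒩 f ∧ IsGradedHom 𝒩 ℳ g ∧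
      f ∘ₗ g = epsIdem N' N'' hN ∧ g ∘ₗ f = epsIdem M' M'' hM ∧
      (∀ u : M →ₗ[A] N, IsGradedHom ℳ 𝒩 u →
        epsIdem N' N'' hN ∘ₗ u = u ∧ u ∘ₗ epsIdem M' M'' hM = u) ∧
      (∀ v : N →ₗ[A] M, IsGradedHom 𝒩 ℳ v →
        v ∘ₗ epsIdem N' N'' hN = v ∧ epsIdem M' M'' hM ∘ₗ v = v)

end GradedModules

section EndRing

variable {M : Type*} [AddCommGroup M] [Module A M]

/-- The degree-`l` component `B_l = Mor_A(M,M)_l` of the graded ring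
`B = END_A(M)`, as an additive subgroup of the `A`-linear endomorphisms of `M`. -/
def endComp (ℳ : G → AddSubgroup M) (l : G) : AddSubgroup (M →ₗ[A] M) where
  carrier := {f : M →ₗ[A] M | IsDegree ℳ ℳ f l}
  zero_mem' := fun g m _ => by simpa using zero_mem (ℳ (g * l))
  add_mem' := by
    intro u v hu hv g m hm
    simpa using add_mem (hu g m hm) (hv g m hm)
  neg_mem' := by
    intro u hu g m hm
    simpa using neg_mem (hu g m hm)

/-- The product `B_l B_k` inside the graded ring `B = END_A(M)` (whose
multiplication is `u · v = v ∘ u`), as an additive subgroup of `End_A(M)`. -/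
def endMul (ℳ : G → AddSubgroup M) (l k : G) : AddSubgroup (M →ₗ[A] M) :=
  AddSubgroup.closure
    {w : M →ₗ[A] M | ∃ u ∈ endComp ℳ l, ∃ v ∈ endComp ℳ k, w = v ∘ₗ u}

/-- The support of the graded ring `B = END_A(M)`. -/
def endSupp (ℳ : G → AddSubgroup M) : Set G :=
  {l : G | endComp (A := A) ℳ l ≠ ⊥}

/-- `B = END_A(M)` is an epsilon-strongly graded ring: for each `l` there is
`ε_l ∈ B_l B_{l⁻¹}` with `ε_l · u = u = u · ε_{l⁻¹}` for all `u ∈ B_l`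
(products taken in `B`, i.e. `u · v = v ∘ u`). -/
def IsEpsilonStrongEnd (ℳ : G → AddSubgroup M) : Prop :=
  ∃ ε : G → (M →ₗ[A] M), ∀ l : G,
    ε l ∈ endMul ℳ l l⁻¹ ∧
    ∀ u ∈ endComp (A := A) ℳ l, u ∘ₗ ε l = u ∧ ε l⁻¹ ∘ₗ u = u

/-- `B = END_A(M)` is an epsilon-crossed product: it is epsilon-strongly graded and
every component `B_l` contains an epsilon-invertible element. -/
def IsEpsilonCrossedEnd (ℳ : G → AddSubgroup M) : Prop :=
  ∃ ε : G → (M →ₗ[A] M),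
    (∀ l : G,
      ε l ∈ endMul ℳ l l⁻¹ ∧
      ∀ u ∈ endComp (A := A) ℳ l, u ∘ₗ ε l = u ∧ ε l⁻¹ ∘ₗ u = u) ∧
    ∀ l : G, ∃ u ∈ endComp (A := A) ℳ l, ∃ v ∈ endComp (A := A) ℳ l⁻¹,
      v ∘ₗ u = ε l ∧ u ∘ₗ v = ε l⁻¹

end EndRing


section Aux

variable {G : Type*} [Group G] [DecidableEq G]
variable {M : Type*} [AddCommGroup M]

/-- Every element is a finite sum of homogeneous elements, normalized. -/
def FinSpan (ℬ : G → AddSubgroup M) : Prop :=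
  ∀ x : M, ∃ (s : Finset G) (c : G → M),
    (∀ g, c g ∈ ℬ g) ∧ (∀ g ∉ s, c g = 0) ∧ x = ∑ g ∈ s, c g

/-- Finite sums of homogeneous elements vanish only trivially. -/
def FinIndep (ℬ : G → AddSubgroup M) : Prop :=
  ∀ (s : Finset G) (c : G → M), (∀ g, c g ∈ ℬ g) → ∑ g ∈ s, c g = 0 →
    ∀ g ∈ s, c g = 0

theorem finSpan_of_isInternal {ℬ : G → AddSubgroup M}
    (h : DirectSum.IsInternal ℬ) : FinSpan ℬ := by
  intro x
  obtain ⟨y, rfl⟩ := h.surjective x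
  induction y using DirectSum.induction_on with
  | zero => exact ⟨∅, 0, fun g => zero_mem _, fun _ _ => rfl, by simp⟩
  | of i z =>
      refine ⟨{i}, fun g => if g = i then (z : M) else 0, ?_, ?_, ?_⟩
      · intro g
        by_cases hg : g = i
        · subst hg; simp only [if_pos rfl]; exact z.2
        · simp only [if_neg hg]; exact zero_mem _
      · intro g hg
        have hne : g ≠ i := by simpa using hg
        simp [hne]
      · simp
  | add a b ha hb =>
      obtain ⟨s, c, hc, hc0, hcs⟩ := ha
      obtain ⟨t, d, hd, hd0, hds⟩ := hb
      refine ⟨s ∪ t, c + d, fun g => add_mem (hc g) (hd g), ?_, ?_⟩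
      · intro g hg
        have h1 : c g = 0 := hc0 g (fun h => hg (Finset.mem_union_left _ h))
        have h2 : d g = 0 := hd0 g (fun h => hg (Finset.mem_union_right _ h))
        simp [h1, h2]
      · rw [map_add, hcs, hds]
        have e1 : ∑ g ∈ s, c g = ∑ g ∈ s ∪ t, c g :=
          Finset.sum_subset Finset.subset_union_left (fun g _ hg => hc0 g hg)
        have e2 : ∑ g ∈ t, d g = ∑ g ∈ s ∪ t, d g :=
          Finset.sum_subset Finset.subset_union_right (fun g _ hg => hd0 g hg)
        rw [e1, e2, ← Finset.sum_add_distrib]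
        rfl

theorem finIndep_of_isInternal {ℬ : G → AddSubgroup M}
    (h : DirectSum.IsInternal ℬ) : FinIndep ℬ := by
  intro s c hc hsum g hg
  set y : DirectSum G fun g => ↥(ℬ g) :=
    ∑ g' ∈ s, DirectSum.of (fun g => ↥(ℬ g)) g' ⟨c g', hc g'⟩ with hy
  have hcoe : DirectSum.coeAddMonoidHom ℬ y = 0 := by
    rw [hy, map_sum]
    simpa only [DirectSum.coeAddMonoidHom_of] using hsum
  have hy0 : y = 0 := h.injective (by rw [hcoe]; simp)
  have : y g = ⟨c g, hc g⟩ := by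
    rw [hy, DFinsupp.finset_sum_apply]
    exact (Finset.sum_eq_single_of_mem g hg
        (fun g' _ hne => DirectSum.of_eq_of_ne _ _ _ hne.symm)).trans
      (DirectSum.of_eq_same (β := fun g => ↥(ℬ g)) g _)
  rw [hy0] at this
  exact congrArg Subtype.val this.symm

theorem FinSpan.susp {ℬ : G → AddSubgroup M} (h : FinSpan ℬ) (l : G) :
    FinSpan (fun g => ℬ (g * l)) := by
  intro x
  obtain ⟨s, c, hc, hc0, rfl⟩ := h x
  refine ⟨s.image (· * l⁻¹), fun g => c (g * l), fun g => hc (g * l), ?_, ?_⟩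
  · intro g hg
    refine hc0 _ (fun hmem => hg ?_)
    exact Finset.mem_image.2 ⟨g * l, hmem, by simp⟩
  · rw [Finset.sum_image (by intro a _ b _ hab; simpa using hab)]
    exact Finset.sum_congr rfl (fun g _ => by rw [inv_mul_cancel_right])

theorem FinIndep.susp {ℬ : G → AddSubgroup M} (h : FinIndep ℬ) (l : G) :
    FinIndep (fun g => ℬ (g * l)) := by
  intro s c hc hsum g hg
  have := h (s.image (· * l)) (fun g => c (g * l⁻¹))
    (fun g => by simpa [mul_assoc] using hc (g * l⁻¹)) ?_ (g * l)
    (Finset.mem_image.2 ⟨g, hg, rfl⟩)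
  · simpa using this
  · rw [Finset.sum_image (by intro a _ b _ hab; simpa using hab)]
    simpa using hsum

end Aux

section Proof4

set_option linter.unusedSectionVars false

variable {G : Type*} [Group G] [DecidableEq G] {A : Type*} [Ring A]
variable {M N : Type*} [AddCommGroup M] [Module A M] [AddCommGroup N] [Module A N]

theorem FinSpan.pi {ℬ : G → AddSubgroup M} (h : FinSpan ℬ) (n : ℕ) :
    FinSpan (piFam ℬ n) := by
  intro x
  choose s c hc hc0 hx using fun i => h (x i)
  refine ⟨Finset.univ.biUnion s, fun g i => c i g, ?_, ?_, ?_⟩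
  · intro g i _
    exact hc i g
  · intro g hg
    funext i
    exact hc0 i g (fun hi => hg (Finset.mem_biUnion.2 ⟨i, Finset.mem_univ i, hi⟩))
  · funext i
    rw [Finset.sum_apply]
    rw [hx i]
    exact Finset.sum_subset (fun g hg => Finset.mem_biUnion.2 ⟨i, Finset.mem_univ i, hg⟩)
      (fun g _ hg => hc0 i g hg)

theorem FinIndep.pi {ℬ : G → AddSubgroup M} (h : FinIndep ℬ) (n : ℕ) :
    FinIndep (piFam ℬ n) := by
  intro s c hc hsum g hg
  funext i
  refine h s (fun g => c g i) (fun g => hc g i (Set.mem_univ i)) ?_ g hg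
  have := congrFun hsum i
  rw [Finset.sum_apply] at this
  exact this

theorem mem_iSup_extract {Q : G → AddSubgroup M} {x : M} (hx : x ∈ ⨆ g, Q g) :
    ∃ (s : Finset G) (c : G → M),
      (∀ g, c g ∈ Q g) ∧ (∀ g ∉ s, c g = 0) ∧ x = ∑ g ∈ s, c g := by
  rw [AddSubgroup.iSup_eq_closure] at hx
  induction hx using AddSubgroup.closure_induction with
  | mem x hx =>
      obtain ⟨_, ⟨g, rfl⟩, hg⟩ := hx
      refine ⟨{g}, fun g' => if g' = g then x else 0, ?_, ?_, ?_⟩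
      · intro g'
        by_cases h' : g' = g
        · subst h'; simp only [if_pos rfl]; exact hg
        · simp only [if_neg h']; exact zero_mem _
      · intro g' hg'
        have : g' ≠ g := by simpa using hg'
        simp [this]
      · simp
  | zero => exact ⟨∅, 0, fun g => zero_mem _, fun _ _ => rfl, by simp⟩
  | add a b _ _ ha hb =>
      obtain ⟨s, c, hc, hc0, rfl⟩ := ha
      obtain ⟨t, d, hd, hd0, rfl⟩ := hb
      refine ⟨s ∪ t, c + d, fun g => add_mem (hc g) (hd g), ?_, ?_⟩
      · intro g hg
        have h1 : c g = 0 := hc0 g (fun h => hg (Finset.mem_union_left _ h))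
        have h2 : d g = 0 := hd0 g (fun h => hg (Finset.mem_union_right _ h))
        simp [h1, h2]
      · have e1 : ∑ g ∈ s, c g = ∑ g ∈ s ∪ t, c g :=
          Finset.sum_subset Finset.subset_union_left (fun g _ hg => hc0 g hg)
        have e2 : ∑ g ∈ t, d g = ∑ g ∈ s ∪ t, d g :=
          Finset.sum_subset Finset.subset_union_right (fun g _ hg => hd0 g hg)
        rw [e1, e2, ← Finset.sum_add_distrib]
        rfl
  | neg a _ ha =>
      obtain ⟨s, c, hc, hc0, rfl⟩ := ha
      exact ⟨s, -c, fun g => neg_mem (hc g), fun g hg => by simp [hc0 g hg],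
        by simp⟩

/-- A graded idempotent has graded range and kernel, which are complementary. -/
theorem graded_idem {ℬ : G → AddSubgroup M} (hS : FinSpan ℬ) (hI : FinIndep ℬ)
    {ε : M →ₗ[A] M} (hidem : ε ∘ₗ ε = ε) (hgr : IsGradedHom ℬ ℬ ε) :
    IsGradedSubmodule ℬ (LinearMap.range ε) ∧
      IsGradedSubmodule ℬ (LinearMap.ker ε) ∧
      IsCompl (LinearMap.range ε) (LinearMap.ker ε) := by
  have hidem' : ∀ x, ε (ε x) = ε x := fun x => by simpa using DFunLike.congr_fun hidem x
  refine ⟨?_, ?_, ?_⟩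
  · refine le_antisymm ?_ (iSup_le fun g => inf_le_left)
    rintro x hx
    obtain ⟨y, rfl⟩ : ∃ y, ε y = x := hx
    obtain ⟨s, c, hc, hc0, rfl⟩ := hS y
    rw [map_sum]
    refine sum_mem (fun g hg => ?_)
    refine AddSubgroup.mem_iSup_of_mem g ?_
    exact ⟨⟨c g, rfl⟩, hgr g _ (hc g)⟩
  · refine le_antisymm ?_ (iSup_le fun g => inf_le_left)
    intro x hx
    have hker : ε x = 0 := hx
    obtain ⟨s, c, hc, hc0, rfl⟩ := hS x
    rw [map_sum] at hker
    have hz : ∀ g ∈ s, ε (c g) = 0 :=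
      hI s (fun g => ε (c g)) (fun g => hgr g _ (hc g)) hker
    refine sum_mem (fun g hg => ?_)
    refine AddSubgroup.mem_iSup_of_mem g ?_
    exact ⟨hz g hg, hc g⟩
  · constructor
    · rw [disjoint_iff]
      refine Submodule.eq_bot_iff _ |>.2 ?_
      rintro x ⟨⟨y, rfl⟩, (hk : ε (ε y) = 0)⟩
      rw [hidem' y] at hk
      exact hk
    · rw [codisjoint_iff, eq_top_iff]
      intro x _
      refine Submodule.mem_sup.2 ⟨ε x, ⟨x, rfl⟩, x - ε x, ?_, by abel⟩
      show ε (x - ε x) = 0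
      rw [map_sub, hidem', sub_self]

/-- In a graded complement pair, the components of a homogeneous element are
homogeneous. -/
theorem graded_compl_proj {ℬ : G → AddSubgroup M} (hI : FinIndep ℬ)
    {V V' : Submodule A M} (hV : IsGradedSubmodule ℬ V) (hV' : IsGradedSubmodule ℬ V')
    (hd : Disjoint V V') {x y : M} (hx : x ∈ V) (hy : y ∈ V') {h : G}
    (hxy : x + y ∈ ℬ h) : x ∈ ℬ h := by
  have hx' : x ∈ ⨆ g, V.toAddSubgroup ⊓ ℬ g := by rw [← hV]; exact hx
  have hy' : y ∈ ⨆ g, V'.toAddSubgroup ⊓ ℬ g := by rw [← hV']; exact hy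
  obtain ⟨s, a, ha, ha0, hX⟩ := mem_iSup_extract hx'
  obtain ⟨t, b, hb, hb0, hY⟩ := mem_iSup_extract hy'
  set w : Finset G := (s ∪ t) ∪ {h} with hw
  have hsw : s ⊆ w := fun g hg => Finset.mem_union_left _ (Finset.mem_union_left _ hg)
  have htw : t ⊆ w := fun g hg => Finset.mem_union_left _ (Finset.mem_union_right _ hg)
  set c : G → M := fun g => a g + b g - (if g = h then x + y else 0) with hcdef
  have hc : ∀ g, c g ∈ ℬ g := by
    intro g
    refine sub_mem (add_mem (ha g).2 (hb g).2) ?_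
    by_cases hgh : g = h
    · subst hgh; simpa using hxy
    · simp only [if_neg hgh]; exact zero_mem _
  have hsum : ∑ g ∈ w, c g = 0 := by
    rw [hcdef]
    rw [Finset.sum_sub_distrib, Finset.sum_add_distrib]
    have e1 : ∑ g ∈ w, a g = x :=
      hX ▸ (Finset.sum_subset hsw (fun g _ hg => ha0 g hg)).symm
    have e2 : ∑ g ∈ w, b g = y :=
      hY ▸ (Finset.sum_subset htw (fun g _ hg => hb0 g hg)).symm
    have e3 : ∑ g ∈ w, (if g = h then x + y else 0) = x + y := by
      rw [Finset.sum_ite_eq' w h (fun _ => x + y)]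
      simp [hw]
    rw [e1, e2, e3]
    abel
  have hzero := hI w c hc hsum
  have hag : ∀ g, g ≠ h → a g = 0 := by
    intro g hgh
    by_cases hgs : g ∈ s
    · have hcg := hzero g (hsw hgs)
      rw [hcdef] at hcg
      simp only [if_neg hgh, sub_zero] at hcg
      have hab : a g = -b g := eq_neg_of_add_eq_zero_left hcg
      have hmem : a g ∈ V ⊓ V' := ⟨(ha g).1, hab ▸ neg_mem (hb g).1⟩
      simpa using hd.le_bot hmem
    · exact ha0 g hgs
  by_cases hhs : h ∈ s
  · have hxa : x = a h := by
      rw [hX]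
      exact Finset.sum_eq_single_of_mem h hhs (fun g _ hgh => hag g hgh)
    rw [hxa]
    exact (ha h).2
  · have hxa : x = 0 := by
      rw [hX]
      exact Finset.sum_eq_zero (fun g hg => hag g (fun e => hhs (e ▸ hg)))
    rw [hxa]
    exact zero_mem _

end Proof4

section Proof4b

set_option linter.unusedSectionVars false

variable {G : Type*} [Group G] [DecidableEq G] {A : Type*} [Ring A]
variable {M N : Type*} [AddCommGroup M] [Module A M] [AddCommGroup N] [Module A N]

/-- If the identity of `N` factors through `M^n` by graded maps, then `N` divides
`M` (with respect to the given gradings). -/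
theorem divides_of_sections {𝒩 : G → AddSubgroup N} {ℬ : G → AddSubgroup M}
    (hS : FinSpan ℬ) (hI : FinIndep ℬ) (n : ℕ)
    (u : Fin n → (N →ₗ[A] M)) (v : Fin n → (M →ₗ[A] N))
    (hu : ∀ i, IsGradedHom 𝒩 ℬ (u i)) (hv : ∀ i, IsGradedHom ℬ 𝒩 (v i))
    (hid : ∑ i, (v i) ∘ₗ (u i) = LinearMap.id) :
    Divides (A := A) 𝒩 ℬ := by
  set U : N →ₗ[A] (Fin n → M) := LinearMap.pi u with hU
  set V : (Fin n → M) →ₗ[A] N := ∑ i, (v i) ∘ₗ LinearMap.proj i with hV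
  have hVapp : ∀ y : Fin n → M, V y = ∑ i, v i (y i) := by
    intro y
    rw [hV, LinearMap.sum_apply]
    rfl
  have hVU : ∀ x : N, V (U x) = x := by
    intro x
    rw [hVapp]
    have := DFunLike.congr_fun hid x
    simpa [LinearMap.sum_apply, hU] using this
  set ε : (Fin n → M) →ₗ[A] (Fin n → M) := U ∘ₗ V with hε
  have hεapp : ∀ y, ε y = U (V y) := fun y => rfl
  have hidem : ε ∘ₗ ε = ε := LinearMap.ext fun y => by
    show U (V (U (V y))) = U (V y)
    rw [hVU]
  have hgrU : ∀ g : G, ∀ x ∈ 𝒩 g, U x ∈ piFam ℬ n g := by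
    intro g x hx i _
    exact hu i g x hx
  have hgrV : ∀ g : G, ∀ y ∈ piFam ℬ n g, V y ∈ 𝒩 g := by
    intro g y hy
    rw [hVapp]
    exact sum_mem (fun i _ => hv i g (y i) (hy i (Set.mem_univ i)))
  have hgrε : IsGradedHom (piFam ℬ n) (piFam ℬ n) ε :=
    fun g y hy => hgrU g _ (hgrV g y hy)
  obtain ⟨hran, hker, hcompl⟩ := graded_idem (hS.pi n) (hI.pi n) hidem hgrε
  have hinj : Function.Injective U := by
    intro x y hxy
    rw [← hVU x, ← hVU y, hxy]
  have hrange : LinearMap.range U = LinearMap.range ε := by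
    apply le_antisymm
    · rintro _ ⟨x, rfl⟩
      exact ⟨U x, by rw [hεapp, hVU]⟩
    · rintro _ ⟨y, rfl⟩
      exact ⟨V y, rfl⟩
  refine ⟨n, LinearMap.range ε, LinearMap.ker ε, hran, hker, hcompl,
    (LinearEquiv.ofInjective U hinj).trans (LinearEquiv.ofEq _ _ hrange), ?_⟩
  intro g x
  have hcoe : ((((LinearEquiv.ofInjective U hinj).trans
      (LinearEquiv.ofEq _ _ hrange)) x : ↥(LinearMap.range ε)) : Fin n → M) = U x := rfl
  rw [hcoe]
  constructor
  · exact hgrU g x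
  · intro hUx
    rw [← hVU x]
    exact hgrV g _ hUx

theorem endMul_le_endComp (ℬ : G → AddSubgroup M) (l k : G) :
    endMul ℬ l k ≤ endComp (A := A) ℬ (l * k) := by
  refine (AddSubgroup.closure_le _).2 ?_
  rintro w ⟨u, hu, v, hv, rfl⟩
  intro g m hm
  have := hv (g * l) _ (hu g m hm)
  rwa [mul_assoc] at this

theorem endMul_extract {ℬ : G → AddSubgroup M} {l k : G} {w : M →ₗ[A] M}
    (hw : w ∈ endMul ℬ l k) :
    ∃ (n : ℕ) (u v : Fin n → (M →ₗ[A] M)),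
      (∀ i, u i ∈ endComp (A := A) ℬ l) ∧ (∀ i, v i ∈ endComp (A := A) ℬ k) ∧
      ∑ i, (v i) ∘ₗ (u i) = w := by
  induction hw using AddSubgroup.closure_induction with
  | mem w hw =>
      obtain ⟨u, hu, v, hv, rfl⟩ := hw
      exact ⟨1, fun _ => u, fun _ => v, fun _ => hu, fun _ => hv, by simp⟩
  | zero => exact ⟨0, fun i => 0, fun i => 0, fun i => i.elim0, fun i => i.elim0, by simp⟩
  | add a b _ _ ha hb =>
      obtain ⟨n₁, u₁, v₁, hu₁, hv₁, hsum₁⟩ := ha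
      obtain ⟨n₂, u₂, v₂, hu₂, hv₂, hsum₂⟩ := hb
      refine ⟨n₁ + n₂, Fin.append u₁ u₂, Fin.append v₁ v₂, ?_, ?_, ?_⟩
      · intro i
        refine Fin.addCases (fun j => ?_) (fun j => ?_) i
        · rw [Fin.append_left]; exact hu₁ j
        · rw [Fin.append_right]; exact hu₂ j
      · intro i
        refine Fin.addCases (fun j => ?_) (fun j => ?_) i
        · rw [Fin.append_left]; exact hv₁ j
        · rw [Fin.append_right]; exact hv₂ j
      · rw [Fin.sum_univ_add]
        simp only [Fin.append_left, Fin.append_right]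
        rw [hsum₁, hsum₂]
  | neg a _ ha =>
      obtain ⟨n, u, v, hu, hv, hsum⟩ := ha
      refine ⟨n, u, fun i => -(v i), hu, fun i => neg_mem (hv i), ?_⟩
      simp only [LinearMap.neg_comp]
      rw [Finset.sum_neg_distrib, hsum]

/-- From `M | M(l)^{(n)}` extract a factorization of the identity through degree
`l` and degree `l⁻¹` endomorphisms. -/
theorem exists_sections_of_divides {ℬ : G → AddSubgroup M} (hI : FinIndep ℬ)
    (l : G) (hd : Divides (A := A) ℬ (fun g => ℬ (g * l))) :
    ∃ (n : ℕ) (u v : Fin n → (M →ₗ[A] M)),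
      (∀ i, u i ∈ endComp (A := A) ℬ l) ∧ (∀ i, v i ∈ endComp (A := A) ℬ l⁻¹) ∧
      ∑ i, (v i) ∘ₗ (u i) = LinearMap.id := by
  obtain ⟨n, V, V', hV, hV', hc, e, he⟩ := hd
  have hI' : FinIndep (piFam (fun g => ℬ (g * l)) n) := (hI.susp l).pi n
  set p := Submodule.linearProjOfIsCompl V V' hc with hp
  set u : Fin n → (M →ₗ[A] M) :=
    fun i => LinearMap.proj i ∘ₗ V.subtype ∘ₗ (e : M →ₗ[A] V) with hu
  set v : Fin n → (M →ₗ[A] M) :=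
    fun i => (e.symm : V →ₗ[A] M) ∘ₗ p ∘ₗ LinearMap.single A (fun _ => M) i with hvdef
  refine ⟨n, u, v, ?_, ?_, ?_⟩
  · intro i g m hm
    exact (he g m).1 hm i (Set.mem_univ i)
  · intro i g m hm
    have hsm : (Pi.single i m : Fin n → M) ∈ piFam (fun g => ℬ (g * l)) n (g * l⁻¹) := by
      refine (AddSubgroup.mem_pi _).2 fun j _ => ?_
      rcases eq_or_ne j i with rfl | hji
      · rw [Pi.single_eq_same]
        show m ∈ ℬ (g * l⁻¹ * l)
        rwa [inv_mul_cancel_right]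
      · rw [Pi.single_eq_of_ne hji]
        exact zero_mem _
    set z : Fin n → M := Pi.single i m with hz
    have hzmem : z ∈ V ⊔ V' := by rw [hc.sup_eq_top]; trivial
    obtain ⟨a, ha, b, hb, hab⟩ := Submodule.mem_sup.1 hzmem
    have hpz : ((p z : V) : Fin n → M) = a := by
      rw [← hab, hp, map_add]
      have h1 : Submodule.linearProjOfIsCompl V V' hc a = ⟨a, ha⟩ :=
        Submodule.linearProjOfIsCompl_apply_left hc ⟨a, ha⟩
      have h2 : Submodule.linearProjOfIsCompl V V' hc b = 0 :=
        Submodule.linearProjOfIsCompl_apply_right hc ⟨b, hb⟩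
      rw [h1, h2, add_zero]
    have hapg : a ∈ piFam (fun g => ℬ (g * l)) n (g * l⁻¹) := by
      refine graded_compl_proj hI' hV hV' hc.disjoint ha hb ?_
      rw [hab]
      exact hsm
    have hvm : v i m = e.symm (p z) := by
      rw [hvdef]
      rfl
    rw [hvm]
    refine (he (g * l⁻¹) (e.symm (p z))).2 ?_
    rw [e.apply_symm_apply, hpz]
    exact hapg
  · ext x : 1
    rw [LinearMap.sum_apply]
    have hterm : ∀ i : Fin n,
        (v i ∘ₗ u i) x = e.symm (p (Pi.single i ((e x : Fin n → M) i))) := by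
      intro i
      rfl
    rw [Finset.sum_congr rfl (fun i _ => hterm i), ← map_sum, ← map_sum,
      Finset.univ_sum_single]
    rw [show p (e x : Fin n → M) = e x from Submodule.linearProjOfIsCompl_apply_left hc (e x)]
    simp

end Proof4b

/-- For a `G`-graded ring `A` and a graded left `A`-module `M`, the
graded ring `B = END_A(M)` is strongly graded (`B_l B_k = B_{lk}` for all `l, k`)
iff `M ∼ M(l)` for all `l ∈ G`. -/
theorem end_isStronglyGraded_iff {M : Type*} [AddCommGroup M] [Module A M]
    (𝒜 : RingGrading G A) (ℳ : ModGrading 𝒜 M) :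
    (∀ l k : G, endMul ℳ.comp l k = endComp (A := A) ℳ.comp (l * k)) ↔
      ∀ l : G,
        Divides (A := A) ℳ.comp (fun g => ℳ.comp (g * l)) ∧
        Divides (A := A) (fun g => ℳ.comp (g * l)) ℳ.comp := by
  have hS : FinSpan ℳ.comp := finSpan_of_isInternal ℳ.isInternal
  have hI : FinIndep ℳ.comp := finIndep_of_isInternal ℳ.isInternal
  constructor
  · intro hstrong l
    have hid1 : (LinearMap.id : M →ₗ[A] M) ∈ endMul ℳ.comp l l⁻¹ := by
      rw [hstrong]
      intro g m hm
      simpa using hm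
    have hid2 : (LinearMap.id : M →ₗ[A] M) ∈ endMul ℳ.comp l⁻¹ l := by
      rw [hstrong]
      intro g m hm
      simpa using hm
    constructor
    · obtain ⟨n, u, v, hu, hv, hsum⟩ := endMul_extract hid1
      refine divides_of_sections (hS.susp l) (hI.susp l) n u v ?_ ?_ hsum
      · exact fun i => hu i
      · intro i g m hm
        have := hv i (g * l) m hm
        simpa [mul_inv_cancel_right] using this
    · obtain ⟨n, u, v, hu, hv, hsum⟩ := endMul_extract hid2
      refine divides_of_sections hS hI n u v ?_ ?_ hsum
      · intro i g m hm
        have := hu i (g * l) m hm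
        simpa [mul_inv_cancel_right] using this
      · exact fun i => hv i
  · intro hdiv l k
    refine le_antisymm (endMul_le_endComp _ _ _) ?_
    intro w hw
    obtain ⟨n, u, v, hu, hv, hsum⟩ := exists_sections_of_divides hI l (hdiv l).1
    have hx : ∀ x : M, ∑ i, v i (u i x) = x := by
      intro x
      have := DFunLike.congr_fun hsum x
      simpa [LinearMap.sum_apply] using this
    have hw' : w = ∑ i, (w ∘ₗ v i) ∘ₗ u i := by
      refine LinearMap.ext fun x => ?_
      rw [LinearMap.sum_apply]
      simp only [LinearMap.comp_apply]
      rw [← map_sum, hx x]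
    rw [hw']
    refine sum_mem fun i _ => ?_
    refine AddSubgroup.subset_closure ⟨u i, hu i, w ∘ₗ v i, ?_, rfl⟩
    intro g m hm
    have h1 : v i m ∈ ℳ.comp (g * l⁻¹) := hv i g m hm
    have h2 := hw (g * l⁻¹) _ h1
    have heq : g * l⁻¹ * (l * k) = g * k := by group
    rwa [heq] at h2
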